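/- Let H ≥ 1 and let C, k, r ≥ 1 be fixed. Then Σ_{h≤H} Π_{i=1}^r ( |L_i(h)| / φ(|L_i(h)|) )^k ≪_{r,k,C} H, uniformly over all linear functions L_i(h) = a_i h + b_i with integer coefficients a_i, b_i ∈ [−C, C], where the convention 0/φ(0) = 0 is used and φ is Euler's totient function. -/

import Mathlib

open Finset

/-- `|m|/φ(|m|)`, with the convention that this is `0` when `m = 0`
(note `φ(0) = 0` and `0/0 = 0` in Lean, so no case split is needed). -/
noncomputable def totientRatio (m : ℤ) : ℝ :=
  (m.natAbs : ℝ) / (m.natAbs.totient : ℝ)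

/-!
Since `∏ xᵢ ^ k ≤ ∑ xᵢ ^ (r k)`, it suffices to treat one form `a h + b` and an exponent `K`.
Euler's product and `(1 + x) ^ K ≤ 1 + 2 ^ K x` on `[0, 1]` give, with `c = 2 ^ (K + 1)`,
`(n / φ n) ^ K ≤ ∏_{p ∣ n} (1 + c / p) ≤ ∑_{d ∣ n} c ^ ω(d) / d`.
For `a ≠ 0` and `h ≤ N` all these `d` are at most `2 C N`, and the solutions of `d ∣ a h + b`
lie in one class modulo `d / gcd(d, a)`, so there are at most `3 C N / d` of them. Swapping the
sums bounds the total by `3 C N ∑_d c ^ ω(d) / d²`, a convergent series because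
`c ^ ω(d) ≤ c ^ (c²) √d`: each prime factor `p > c²` contributes `c < √p`.
-/

theorem one_add_pow_le_one_add_mul {x : ℝ} (hx₀ : 0 ≤ x) (hx₁ : x ≤ 1) (K : ℕ) :
    (1 + x) ^ K ≤ 1 + (2 ^ K - 1) * x := by
  have h := (convexOn_pow K).2 (Set.mem_Ici.2 zero_le_one) (Set.mem_Ici.2 zero_le_two)
    (sub_nonneg.2 hx₁) hx₀ (by ring)
  simp only [smul_eq_mul, one_pow, mul_one] at h
  rw [show 1 + x = 1 - x + x * 2 by ring]
  linarith

theorem inv_one_sub_inv_pow_le {p : ℝ} (hp : 2 ≤ p) (K : ℕ) :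
    (1 - p⁻¹)⁻¹ ^ K ≤ 1 + 2 ^ (K + 1) / p := by
  have hp₁ : 0 < p - 1 := by linarith
  have hx : (1 - p⁻¹)⁻¹ = 1 + (p - 1)⁻¹ := by
    field_simp
    ring
  have hx₁ : (p - 1)⁻¹ ≤ 1 := inv_le_one_of_one_le₀ (by linarith)
  have hx₂ : (p - 1)⁻¹ ≤ 2 / p := by
    rw [inv_le_iff_one_le_mul₀ hp₁]; field_simp; linarith
  calc (1 - p⁻¹)⁻¹ ^ K ≤ 1 + (2 ^ K - 1) * (p - 1)⁻¹ :=
        hx ▸ one_add_pow_le_one_add_mul (inv_nonneg.2 hp₁.le) hx₁ K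
    _ ≤ 1 + 2 ^ K * (2 / p) := by
        gcongr
        linarith
    _ = 1 + 2 ^ (K + 1) / p := by ring

namespace Nat

theorem cast_div_totient_eq_prod {n : ℕ} (hn : n ≠ 0) :
    (n : ℝ) / n.totient = ∏ p ∈ n.primeFactors, (1 - (p : ℝ)⁻¹)⁻¹ := by
  have h := congrArg (Rat.cast : ℚ → ℝ) (totient_eq_mul_prod_factors n)
  push_cast at h
  rw [h, prod_inv_distrib, div_mul_cancel_left₀ (by exact_mod_cast hn)]

theorem prod_primeFactors_one_add_div_le_sum_divisors {c : ℝ} (hc : 0 ≤ c) {n : ℕ} (hn : n ≠ 0) :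
    ∏ p ∈ n.primeFactors, (1 + c / p) ≤ ∑ d ∈ n.divisors, c ^ #d.primeFactors / d := by
  have hprime : ∀ t ∈ n.primeFactors.powerset, ∀ p ∈ t, p.Prime := fun t ht p hp =>
    prime_of_mem_primeFactors (mem_powerset.1 ht hp)
  have hinj : Set.InjOn (fun t : Finset ℕ => ∏ p ∈ t, p) n.primeFactors.powerset :=
    fun t ht s hs hts => by
      rw [← primeFactors_prod (hprime t ht), ← primeFactors_prod (hprime s hs)]
      exact congrArg primeFactors hts
  calc ∏ p ∈ n.primeFactors, (1 + c / p)
      = ∑ t ∈ n.primeFactors.powerset, c ^ #(∏ p ∈ t, p).primeFactors / (∏ p ∈ t, p : ℕ) := by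
        rw [prod_one_add]
        refine sum_congr rfl fun t ht => ?_
        rw [primeFactors_prod (hprime t ht), prod_div_distrib, prod_const, cast_prod]
    _ = ∑ d ∈ n.primeFactors.powerset.image (fun t => ∏ p ∈ t, p), c ^ #d.primeFactors / d :=
        (sum_image (f := fun d : ℕ => c ^ #d.primeFactors / d) hinj).symm
    _ ≤ ∑ d ∈ n.divisors, c ^ #d.primeFactors / d := by
        refine sum_le_sum_of_subset_of_nonneg ?_ fun d _ _ => by positivity
        simp only [subset_iff, mem_image, mem_powerset, mem_divisors]
        rintro _ ⟨t, ht, rfl⟩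
        exact ⟨(prod_dvd_prod_of_subset _ _ _ ht).trans n.prod_primeFactors_dvd, hn⟩

theorem div_totient_pow_le_sum_divisors {n : ℕ} (hn : n ≠ 0) (K : ℕ) :
    ((n : ℝ) / n.totient) ^ K ≤ ∑ d ∈ n.divisors, (2 ^ (K + 1) : ℝ) ^ #d.primeFactors / d := by
  rw [cast_div_totient_eq_prod hn, ← prod_pow]
  have hp : ∀ p ∈ n.primeFactors, (2 : ℝ) ≤ p := fun p hp => by
    exact_mod_cast (prime_of_mem_primeFactors hp).two_le
  refine (prod_le_prod (fun p h => ?_) fun p h => inv_one_sub_inv_pow_le (hp p h) K).trans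
    (prod_primeFactors_one_add_div_le_sum_divisors (by positivity) hn)
  have := inv_le_one_of_one_le₀ (one_le_two.trans (hp p h))
  exact pow_nonneg (inv_nonneg.2 (sub_nonneg.2 this)) K

theorem pow_card_primeFactors_le {c : ℕ} (hc : 1 ≤ c) {d : ℕ} (hd : d ≠ 0) :
    (c : ℝ) ^ #d.primeFactors ≤ c ^ (c ^ 2) * (d : ℝ) ^ (1 / 2 : ℝ) := by
  have hsmall : ∏ p ∈ d.primeFactors with p ≤ c ^ 2, (c : ℝ) ≤ c ^ (c ^ 2) := by
    rw [prod_const]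
    refine pow_le_pow_right₀ (by exact_mod_cast hc) ((card_le_card ?_).trans (card_Icc 1 _).le)
    intro p hp
    simp only [mem_filter, mem_primeFactors] at hp
    exact mem_Icc.2 ⟨hp.1.1.one_lt.le, hp.2⟩
  have hlarge : ∏ p ∈ d.primeFactors with ¬p ≤ c ^ 2, (c : ℝ) ≤ (d : ℝ) ^ (1 / 2 : ℝ) :=
    calc ∏ p ∈ d.primeFactors with ¬p ≤ c ^ 2, (c : ℝ)
        ≤ ∏ p ∈ d.primeFactors with ¬p ≤ c ^ 2, (p : ℝ) ^ (1 / 2 : ℝ) := by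
          refine prod_le_prod (fun _ _ => by positivity) fun p hp => ?_
          have hcp : (c : ℝ) ^ 2 ≤ p := by exact_mod_cast (not_le.1 (mem_filter.1 hp).2).le
          rw [← Real.sqrt_eq_rpow]
          exact Real.le_sqrt_of_sq_le hcp
      _ ≤ ∏ p ∈ d.primeFactors, (p : ℝ) ^ (1 / 2 : ℝ) :=
          prod_le_prod_of_subset_of_one_le (filter_subset _ _) (fun _ _ => by positivity)
            fun p hp _ =>
            Real.one_le_rpow (by exact_mod_cast (prime_of_mem_primeFactors hp).one_le)
              (by norm_num)
      _ = (∏ p ∈ d.primeFactors, (p : ℝ)) ^ (1 / 2 : ℝ) :=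
          Real.finsetProd_rpow _ _ (fun _ _ => by positivity) _
      _ ≤ (d : ℝ) ^ (1 / 2 : ℝ) := by
          gcongr
          rw [← cast_prod]
          exact_mod_cast le_of_dvd (pos_of_ne_zero hd) d.prod_primeFactors_dvd
  rw [← prod_const, ← prod_filter_mul_prod_filter_not _ (· ≤ c ^ 2)]
  exact mul_le_mul hsmall hlarge (by positivity) (by positivity)

theorem summable_pow_card_primeFactors_div_sq {c : ℕ} (hc : 1 ≤ c) :
    Summable fun d : ℕ => (c : ℝ) ^ #d.primeFactors / (d : ℝ) ^ 2 := by
  refine Summable.of_nonneg_of_le (fun _ => by positivity) (fun d => ?_)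
    ((Real.summable_nat_rpow_inv.2 (by norm_num : (1 : ℝ) < 3 / 2)).mul_left ((c : ℝ) ^ c ^ 2))
  rcases eq_zero_or_pos d with rfl | hd
  · simp
  have hd' : (0 : ℝ) < d := by exact_mod_cast hd
  have h32 : (d : ℝ) ^ (3 / 2 : ℝ) = (d : ℝ) ^ 2 / (d : ℝ) ^ (1 / 2 : ℝ) := by
    rw [← Real.rpow_natCast, ← Real.rpow_sub hd']; norm_num
  rw [h32, inv_div, ← mul_div_assoc]
  gcongr
  exact pow_card_primeFactors_le hc hd.ne'

end Nat

theorem card_le_div_add_one_of_modEq {S : Finset ℕ} {N e : ℕ} (hS : ∀ x ∈ S, x ≤ N)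
    (hmod : ∀ x ∈ S, ∀ y ∈ S, x ≡ y [MOD e]) : #S ≤ N / e + 1 :=
  calc #S ≤ #(range (N / e + 1)) :=
        card_le_card_of_injOn (· / e)
          (fun x hx => mem_range.2 (Nat.lt_succ_of_le (Nat.div_le_div_right (hS x hx))))
          fun x hx y hy hxy => by
            rw [← Nat.div_add_mod x e, ← Nat.div_add_mod y e, (hmod x hx y hy : x % e = y % e)]
            exact congrArg (e * · + y % e) hxy
    _ = N / e + 1 := card_range _

theorem card_filter_dvd_mul_add_le (a b : ℤ) (N : ℕ) {d : ℕ} (hd : 0 < d) :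
    #{h ∈ Icc 1 N | (d : ℤ) ∣ a * (h : ℕ) + b} ≤ N / (d / Int.gcd d a) + 1 := by
  apply card_le_div_add_one_of_modEq
  · exact fun h hh => (mem_Icc.1 (mem_filter.1 hh).1).2
  intro x hx y hy
  have hxy : a * x ≡ a * y [ZMOD d] := Int.modEq_iff_dvd.2 <| by
    simpa using dvd_sub (mem_filter.1 hy).2 (mem_filter.1 hx).2
  have := Int.ModEq.cancel_left_div_gcd (by exact_mod_cast hd) hxy
  rwa [← Int.natCast_div, Int.natCast_modEq_iff] at this

theorem card_filter_dvd_mul_add_le_div (b : ℤ) {a : ℤ} (ha : a ≠ 0) (N : ℕ) {d : ℕ} (hd : 0 < d) :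
    (#{h ∈ Icc 1 N | (d : ℤ) ∣ a * (h : ℕ) + b} : ℝ) ≤ |(a : ℝ)| * N / d + 1 := by
  set g := Int.gcd d a
  have hg : g ∣ d := Nat.gcd_dvd_left _ _
  have hg₀ : (0 : ℝ) < g := by exact_mod_cast Int.gcd_pos_of_ne_zero_right _ ha
  have hga : (g : ℝ) ≤ |(a : ℝ)| := by
    rw [← Int.cast_abs]
    exact_mod_cast Int.le_of_dvd (abs_pos.2 ha) ((dvd_abs _ _).2 (Int.gcd_dvd_right _ _))
  calc (#{h ∈ Icc 1 N | (d : ℤ) ∣ a * (h : ℕ) + b} : ℝ)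
      ≤ ((N / (d / g) : ℕ) : ℝ) + 1 := by exact_mod_cast card_filter_dvd_mul_add_le a b N hd
    _ ≤ N / ((d : ℝ) / g) + 1 := by
        gcongr
        rw [← Nat.cast_div hg hg₀.ne']
        exact Nat.cast_div_le
    _ = g * N / d + 1 := by field_simp
    _ ≤ |(a : ℝ)| * N / d + 1 := by gcongr

theorem totientRatio_nonneg (m : ℤ) : 0 ≤ totientRatio m := by
  unfold totientRatio; positivity

theorem totientRatio_le_natAbs (m : ℤ) : totientRatio m ≤ m.natAbs := by
  rcases eq_or_ne m 0 with rfl | hm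
  · simp [totientRatio]
  · exact div_le_self (Nat.cast_nonneg _)
      (Nat.one_le_cast.2 (Nat.totient_pos.2 (Int.natAbs_pos.2 hm)))

theorem totientRatio_pow_le_sum_filter_dvd {m : ℤ} {M : ℕ} (hm : m.natAbs ≤ M) {K : ℕ}
    (hK : K ≠ 0) :
    totientRatio m ^ K ≤
      ∑ d ∈ Icc 1 M with d ∣ m.natAbs, (2 ^ (K + 1) : ℝ) ^ #d.primeFactors / d := by
  rcases eq_or_ne m 0 with rfl | hm₀
  · rw [totientRatio, Int.natAbs_zero, Nat.cast_zero, zero_div, zero_pow hK]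
    positivity
  refine (Nat.div_totient_pow_le_sum_divisors (Int.natAbs_ne_zero.2 hm₀) K).trans
    (sum_le_sum_of_subset_of_nonneg (fun d hd => ?_) fun _ _ _ => by positivity)
  obtain ⟨hdm, hm₀'⟩ := Nat.mem_divisors.1 hd
  exact mem_filter.2 ⟨mem_Icc.2 ⟨Nat.pos_of_dvd_of_pos hdm (Nat.pos_of_ne_zero hm₀'),
    (Nat.le_of_dvd (Nat.pos_of_ne_zero hm₀') hdm).trans hm⟩, hdm⟩

theorem natAbs_mul_add_le_two_mul {a b : ℤ} {C : ℕ} (ha : |a| ≤ C) (hb : |b| ≤ C) {h N : ℕ}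
    (hh : h ∈ Icc 1 N) : (a * h + b).natAbs ≤ 2 * C * N := by
  obtain ⟨h₁, hN⟩ := mem_Icc.1 hh
  have : |a * h + b| ≤ 2 * C * N :=
    calc |a * h + b| ≤ |a| * h + |b| := by
          simpa only [abs_mul, Nat.abs_cast] using abs_add_le (a * h) b
      _ ≤ C * N + C := by gcongr
      _ ≤ 2 * C * N := by nlinarith [(by exact_mod_cast h₁.trans hN : (1 : ℤ) ≤ N)]
  rw [Int.abs_eq_natAbs] at this
  exact_mod_cast this

theorem sum_totientRatio_mul_add_pow_le {C K : ℕ} (hK : K ≠ 0) {a b : ℤ} (ha₀ : a ≠ 0)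
    (ha : |a| ≤ C) (hb : |b| ≤ C) (N : ℕ) :
    ∑ h ∈ Icc 1 N, totientRatio (a * h + b) ^ K ≤
      3 * C * (∑' d : ℕ, (2 ^ (K + 1) : ℝ) ^ #d.primeFactors / (d : ℝ) ^ 2) * N := by
  set w : ℕ → ℝ := fun d => (2 ^ (K + 1) : ℝ) ^ #d.primeFactors / d
  have hcount : ∀ d ∈ Icc 1 (2 * C * N),
      (#{h ∈ Icc 1 N | (d : ℤ) ∣ a * (h : ℕ) + b} : ℝ) ≤ 3 * C * N / (d : ℝ) := fun d hd => by
    obtain ⟨hd₁, hdM⟩ := mem_Icc.1 hd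
    have hd : (0 : ℝ) < d := by exact_mod_cast hd₁
    have hdM' : (d : ℝ) ≤ 2 * C * N := by exact_mod_cast hdM
    calc _ ≤ |(a : ℝ)| * N / d + 1 := card_filter_dvd_mul_add_le_div b ha₀ N hd₁
      _ ≤ C * N / d + 2 * C * N / d := by
          gcongr
          · exact_mod_cast ha
          · rwa [one_le_div₀ hd]
      _ = 3 * C * N / d := by ring
  calc ∑ h ∈ Icc 1 N, totientRatio (a * h + b) ^ K
      ≤ ∑ h ∈ Icc 1 N, ∑ d ∈ Icc 1 (2 * C * N) with d ∣ (a * h + b).natAbs, w d :=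
        sum_le_sum fun h hh =>
          totientRatio_pow_le_sum_filter_dvd (natAbs_mul_add_le_two_mul ha hb hh) hK
    _ = ∑ d ∈ Icc 1 (2 * C * N), #{h ∈ Icc 1 N | (d : ℤ) ∣ a * (h : ℕ) + b} * w d := by
        rw [sum_comm' (t' := Icc 1 (2 * C * N))
          (s' := fun d => {h ∈ Icc 1 N | (d : ℤ) ∣ a * (h : ℕ) + b})]
        · simp only [sum_const, nsmul_eq_mul]
        · intro h d
          simp only [mem_filter, Int.natCast_dvd]
          tauto
    _ ≤ ∑ d ∈ Icc 1 (2 * C * N), 3 * C * N / d * w d :=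
        sum_le_sum fun d hd => by gcongr; exact hcount d hd
    _ = 3 * C * N * ∑ d ∈ Icc 1 (2 * C * N), (2 ^ (K + 1) : ℝ) ^ #d.primeFactors / (d : ℝ) ^ 2 := by
        rw [mul_sum]
        refine sum_congr rfl fun d _ => ?_
        simp only [w]
        ring
    _ ≤ 3 * C * (∑' d : ℕ, (2 ^ (K + 1) : ℝ) ^ #d.primeFactors / (d : ℝ) ^ 2) * N := by
        rw [mul_right_comm]
        gcongr
        have hT := Nat.summable_pow_card_primeFactors_div_sq (c := 2 ^ (K + 1)) Nat.one_le_two_pow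
        push_cast at hT
        exact hT.sum_le_tsum _ fun _ _ => by positivity

theorem exists_sum_totientRatio_pow_le {C : ℕ} (hC : 1 ≤ C) {K : ℕ} (hK : K ≠ 0) :
    ∃ A : ℝ, 0 < A ∧ ∀ (N : ℕ) (a b : ℤ), |a| ≤ C → |b| ≤ C →
      ∑ h ∈ Icc 1 N, totientRatio (a * h + b) ^ K ≤ A * N := by
  set T := ∑' d : ℕ, (2 ^ (K + 1) : ℝ) ^ #d.primeFactors / (d : ℝ) ^ 2
  have hT : 0 ≤ T := tsum_nonneg fun _ => by positivity
  refine ⟨C ^ K + 3 * C * T, by positivity, fun N a b ha hb => ?_⟩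
  rcases eq_or_ne a 0 with rfl | ha₀
  · have hbC : totientRatio b ≤ C := (totientRatio_le_natAbs b).trans <| by
      rw [Nat.cast_natAbs, Int.cast_abs]
      exact_mod_cast hb
    simp only [zero_mul, zero_add, sum_const, Nat.card_Icc, add_tsub_cancel_right, nsmul_eq_mul]
    rw [mul_comm]
    gcongr
    exact (pow_le_pow_left₀ (totientRatio_nonneg b) hbC K).trans
      (le_add_of_nonneg_right (by positivity))
  · refine (sum_totientRatio_mul_add_pow_le hK ha₀ ha hb N).trans ?_
    gcongr
    exact le_add_of_nonneg_left (by positivity)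

theorem prod_pow_le_sum_pow_card {ι : Type*} [Fintype ι] [Nonempty ι] {x : ι → ℝ}
    (hx : ∀ i, 0 ≤ x i) (k : ℕ) : ∏ i, x i ^ k ≤ ∑ i, x i ^ (Fintype.card ι * k) := by
  obtain ⟨j, -, hj⟩ := exists_max_image univ x univ_nonempty
  calc ∏ i, x i ^ k ≤ ∏ _i : ι, x j ^ k :=
        prod_le_prod (fun i _ => pow_nonneg (hx i) k)
          fun i _ => pow_le_pow_left₀ (hx i) (hj i (mem_univ i)) k
    _ = x j ^ (Fintype.card ι * k) := by rw [prod_const, card_univ, ← pow_mul, mul_comm]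
    _ ≤ ∑ i, x i ^ (Fintype.card ι * k) :=
        single_le_sum (fun i _ => pow_nonneg (hx i) _) (mem_univ j)

/-- **Lemma 2.5.** Let `H ≥ 1` and `C, k, r ≥ 1` be fixed. Then
`∑_{h≤H} ∏_{i=1}^r (|L_i(h)|/φ(|L_i(h)|))^k ≪_{r,k,C} H`, uniformly over all
linear functions `L_i(h) = a_i·h + b_i` with integer coefficients
`a_i, b_i ∈ [−C, C]`. -/
theorem totient_ratio_linear_forms_bound (C k r : ℕ) (hC : 1 ≤ C) (hk : 1 ≤ k)
    (hr : 1 ≤ r) :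
    ∃ K : ℝ, 0 < K ∧ ∀ H : ℝ, 1 ≤ H → ∀ a b : Fin r → ℤ,
      (∀ i, |a i| ≤ (C : ℤ)) → (∀ i, |b i| ≤ (C : ℤ)) →
      ∑ h ∈ Icc 1 ⌊H⌋₊, ∏ i : Fin r, totientRatio (a i * (h : ℤ) + b i) ^ k
        ≤ K * H := by
  have : Nonempty (Fin r) := Fin.pos_iff_nonempty.1 hr
  obtain ⟨A, hA, hsum⟩ := exists_sum_totientRatio_pow_le hC (K := r * k) (by positivity)
  refine ⟨r * A, by positivity, fun H hH a b ha hb => ?_⟩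
  calc ∑ h ∈ Icc 1 ⌊H⌋₊, ∏ i : Fin r, totientRatio (a i * (h : ℤ) + b i) ^ k
      ≤ ∑ h ∈ Icc 1 ⌊H⌋₊, ∑ i : Fin r, totientRatio (a i * (h : ℤ) + b i) ^ (r * k) :=
        sum_le_sum fun h _ => by
          simpa using prod_pow_le_sum_pow_card
            (x := fun i => totientRatio (a i * (h : ℤ) + b i)) (fun i => totientRatio_nonneg _) k
    _ = ∑ i : Fin r, ∑ h ∈ Icc 1 ⌊H⌋₊, totientRatio (a i * (h : ℤ) + b i) ^ (r * k) := sum_comm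
    _ ≤ ∑ _i : Fin r, A * ⌊H⌋₊ := sum_le_sum fun i _ => hsum _ _ _ (ha i) (hb i)
    _ ≤ r * A * H := by
        rw [sum_const, card_univ, Fintype.card_fin, nsmul_eq_mul, mul_assoc]
        gcongr
        exact Nat.floor_le (by linarith)
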